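/- Let A be an n×n Hermitian matrix with distinct eigenvalues a_1 > ⋯ > a_n and orthonormal eigenvectors, x a vector, b > 0, and M = A + b x x†. If x has components u_i in the eigenbasis of A with all |u_i|² > 0, then the eigenvalues λ of M distinct from the a_i are precisely the solutions of 1 + b Σ_{i=1}^n |u_i|²/(a_i - λ) = 0, and they strictly interlace: λ_1 > a_1 > λ_2 > a_2 > ⋯ > λ_n > a_n where λ_1, …, λ_n are the eigenvalues of M. -/

import Mathlib

open Matrix

/-- The rank-one additive perturbation `M = A + b x x†` of a Hermitian matrix `A`
(written in the eigenbasis of `A`, so `A = diag(a_1,…,a_n)` with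
`a_1 > ⋯ > a_n`, and `x` has components `u_i`). -/
noncomputable def rankOnePert (n : ℕ) (a : Fin n → ℝ) (u : Fin n → ℂ) (b : ℝ) :
    Matrix (Fin n) (Fin n) ℂ :=
  Matrix.diagonal (fun i => (a i : ℂ)) + (b : ℂ) • Matrix.vecMulVec u (star u)

/-!
By the matrix determinant lemma, `det (M - λ) = ∏ (a_i - λ) · f(λ)` away from the `a_i`, where
`f(λ) = 1 + b Σ |u_i|² / (a_i - λ)` is the secular function. On each gap `(a_i, a_{i-1})`, and on
`(a_1, ∞)`, the function `f` is continuous; it tends to `-∞` at the left end (simple pole with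
negative residue) and to `+∞`, resp. to `1`, at the right end, so it has a zero there. These `n`
zeros are eigenvalues of `M`, and they interlace with the `a_i` because each lies in its own gap.
-/

open Filter Topology Set

namespace Matrix

variable {m K : Type*} [Fintype m] [DecidableEq m] [Field K]

theorem det_diagonal_add_vecMulVec {d : m → K} (hd : ∀ i, d i ≠ 0) (v w : m → K) :
    (diagonal d + vecMulVec v w).det = (∏ i, d i) * (1 + ∑ i, w i * (v i / d i)) := by
  have hfactor : diagonal d + vecMulVec v w =
      diagonal d * (1 + replicateCol Unit (fun i => v i / d i) * replicateRow Unit w) := by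
    rw [← vecMulVec_eq, Matrix.mul_add, Matrix.mul_one]
    congr 1
    ext i j
    rw [diagonal_mul, vecMulVec_apply, vecMulVec_apply, ← mul_assoc, mul_div_cancel₀ _ (hd i)]
  rw [hfactor, det_mul, det_diagonal, det_one_add_replicateCol_mul_replicateRow, dotProduct]

end Matrix

lemma continuousAt_sum_div_sub {ι : Type*} (a c : ι → ℝ) (s : Finset ι) {t : ℝ}
    (ht : ∀ i ∈ s, a i ≠ t) :
    ContinuousAt (fun t => ∑ i ∈ s, c i / (a i - t)) t :=
  tendsto_finsetSum s fun i hi =>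
    continuousAt_const.div (continuousAt_const.sub continuousAt_id) (sub_ne_zero.2 (ht i hi))

lemma tendsto_div_sub_nhdsGT {c : ℝ} (hc : 0 < c) (s : ℝ) :
    Tendsto (fun t => c / (s - t)) (𝓝[>] s) atBot := by
  have h : Tendsto (fun t => t - s) (𝓝[>] s) (𝓝[>] 0) := tendsto_nhdsWithin_iff.2
    ⟨((continuous_sub_right s).tendsto' s 0 (sub_self s)).mono_left nhdsWithin_le_nhds,
      by filter_upwards [self_mem_nhdsWithin] with t (ht : s < t) using sub_pos.2 ht⟩
  refine tendsto_neg_atTop_atBot.comp (h.inv_tendsto_nhdsGT_zero.const_mul_atTop hc) |>.congr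
    fun t => ?_
  rw [Function.comp_apply, ← neg_sub t s, div_neg, div_eq_mul_inv]
  rfl

lemma tendsto_div_sub_nhdsLT {c : ℝ} (hc : 0 < c) (s : ℝ) :
    Tendsto (fun t => c / (s - t)) (𝓝[<] s) atTop := by
  have h : Tendsto (fun t => s - t) (𝓝[<] s) (𝓝[>] 0) := tendsto_nhdsWithin_iff.2
    ⟨((continuous_sub_left s).tendsto' s 0 (sub_self s)).mono_left nhdsWithin_le_nhds,
      by filter_upwards [self_mem_nhdsWithin] with t (ht : t < s) using sub_pos.2 ht⟩
  simpa [div_eq_mul_inv] using h.inv_tendsto_nhdsGT_zero.const_mul_atTop hc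

section Secular

variable {ι : Type*} [Fintype ι] (a c : ι → ℝ) (b : ℝ)

noncomputable def secularFun (t : ℝ) : ℝ := 1 + b * ∑ i, c i / (a i - t)

lemma continuousAt_secularFun {t : ℝ} (ht : ∀ i, a i ≠ t) : ContinuousAt (secularFun a c b) t :=
  continuousAt_const.add <| continuousAt_const.mul <|
    continuousAt_sum_div_sub a c Finset.univ fun i _ => ht i

lemma tendsto_secularFun_atTop : Tendsto (secularFun a c b) atTop (𝓝 1) := by
  have hterm (i : ι) : Tendsto (fun t => c i / (a i - t)) atTop (𝓝 0) :=
    tendsto_const_nhds.div_atBot <|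
      (tendsto_atBot_add_const_left atTop (a i) tendsto_neg_atTop_atBot).congr
        fun t => (sub_eq_add_neg _ _).symm
  unfold secularFun
  simpa using (tendsto_finsetSum Finset.univ fun i _ => hterm i).const_mul b |>.const_add 1

lemma exists_secularFun_eq_add_pole (ha : Function.Injective a) (k : ι) :
    ∃ g : ℝ → ℝ, ContinuousAt g (a k) ∧ ∀ t, secularFun a c b t = g t + b * c k / (a k - t) := by
  classical
  refine ⟨fun t => 1 + b * ∑ i ∈ Finset.univ.erase k, c i / (a i - t), ?_, fun t => ?_⟩
  · exact continuousAt_const.add <| continuousAt_const.mul <|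
      continuousAt_sum_div_sub a c _ fun i hi => ha.ne (Finset.ne_of_mem_erase hi)
  · rw [secularFun, ← Finset.add_sum_erase _ _ (Finset.mem_univ k)]
    ring

variable {a c b}

lemma tendsto_secularFun_nhdsGT (ha : Function.Injective a) (hb : 0 < b) {k : ι} (hc : 0 < c k) :
    Tendsto (secularFun a c b) (𝓝[>] a k) atBot := by
  obtain ⟨g, hg, hfg⟩ := exists_secularFun_eq_add_pole a c b ha k
  exact ((hg.tendsto.mono_left nhdsWithin_le_nhds).add_atBot
    (tendsto_div_sub_nhdsGT (mul_pos hb hc) (a k))).congr fun t => (hfg t).symm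

lemma tendsto_secularFun_nhdsLT (ha : Function.Injective a) (hb : 0 < b) {k : ι} (hc : 0 < c k) :
    Tendsto (secularFun a c b) (𝓝[<] a k) atTop := by
  obtain ⟨g, hg, hfg⟩ := exists_secularFun_eq_add_pole a c b ha k
  exact ((hg.tendsto.mono_left nhdsWithin_le_nhds).add_atTop
    (tendsto_div_sub_nhdsLT (mul_pos hb hc) (a k))).congr fun t => (hfg t).symm

end Secular

section Interlacing

variable {ι : Type*} [LinearOrder ι] {a : ι → ℝ}

-- For strictly antitone `a`: the gap `(a i, a (pred i))`, or `(a i, ∞)` for the least `i`.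
def gapAbove (a : ι → ℝ) (i : ι) : Set ℝ := {t | a i < t ∧ ∀ j < i, t < a j}

lemma ordConnected_gapAbove (i : ι) : (gapAbove a i).OrdConnected :=
  ⟨fun _ hx _ hy _ ht => ⟨hx.1.trans_le ht.1, fun j hj => ht.2.trans_lt (hy.2 j hj)⟩⟩

lemma ne_of_mem_gapAbove (ha : StrictAnti a) {i : ι} {t : ℝ} (ht : t ∈ gapAbove a i) (j : ι) :
    a j ≠ t := by
  rcases lt_or_ge j i with hji | hij
  · exact (ht.2 j hji).ne'
  · exact ((ha.antitone hij).trans_lt ht.1).ne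

lemma gapAbove_mem_nhdsGT [Finite ι] (ha : StrictAnti a) (i : ι) : gapAbove a i ∈ 𝓝[>] a i := by
  have hbelow : ∀ᶠ t in 𝓝 (a i), ∀ j < i, t < a j := eventually_all.2 fun j => by
    by_cases hj : j < i
    · exact (eventually_lt_nhds (ha hj)).mono fun _ ht _ => ht
    · exact .of_forall fun _ h => absurd h hj
  exact inter_mem_nhdsWithin _ hbelow

variable [PredOrder ι] [Fintype ι] {c : ι → ℝ} {b : ℝ}

lemma exists_secularFun_pos_mem_gapAbove (ha : StrictAnti a) (hb : 0 < b) (hc : ∀ i, 0 < c i)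
    (i : ι) : ∃ t ∈ gapAbove a i, 0 < secularFun a c b t := by
  by_cases hi : IsMin i
  · have hgap : ∀ᶠ t in atTop, t ∈ gapAbove a i :=
      (eventually_gt_atTop (a i)).mono fun _ ht => ⟨ht, fun j hj => (hi.not_lt hj).elim⟩
    exact (hgap.and ((tendsto_secularFun_atTop a c b).eventually
      (eventually_gt_nhds one_pos))).exists
  · have hpred : a i < a (Order.pred i) := ha (Order.pred_lt_of_not_isMin hi)
    have hgap : ∀ᶠ t in 𝓝[<] a (Order.pred i), t ∈ gapAbove a i := by
      filter_upwards [(eventually_gt_nhds hpred).filter_mono nhdsWithin_le_nhds,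
        self_mem_nhdsWithin] with t hit htp
      exact ⟨hit, fun j hj => htp.trans_le (ha.antitone (Order.le_pred_of_lt hj))⟩
    exact (hgap.and ((tendsto_secularFun_nhdsLT ha.injective hb (hc _)).eventually
      (eventually_gt_atTop 0))).exists

theorem exists_secularFun_eq_zero_mem_gapAbove (ha : StrictAnti a) (hb : 0 < b)
    (hc : ∀ i, 0 < c i) (i : ι) : ∃ t ∈ gapAbove a i, secularFun a c b t = 0 := by
  obtain ⟨x, hfx, hx⟩ := ((tendsto_secularFun_nhdsGT ha.injective hb (hc i)).eventually
    (eventually_lt_atBot 0) |>.and (gapAbove_mem_nhdsGT ha i)).exists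
  obtain ⟨y, hy, hfy⟩ := exists_secularFun_pos_mem_gapAbove ha hb hc i
  have hcont : ContinuousOn (secularFun a c b) (gapAbove a i) := fun t ht =>
    (continuousAt_secularFun a c b (ne_of_mem_gapAbove ha ht)).continuousWithinAt
  exact (ordConnected_gapAbove i).isPreconnected.intermediate_value hx hy hcont ⟨hfx.le, hfy.le⟩

end Interlacing

lemma det_rankOnePert_sub_smul_one_eq_zero_iff {n : ℕ} {a : Fin n → ℝ} (u : Fin n → ℂ) (b : ℝ)
    {lam : ℝ} (hlam : ∀ i, a i ≠ lam) :
    (rankOnePert n a u b - (lam : ℂ) • 1).det = 0 ↔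
      secularFun a (fun i => Complex.normSq (u i)) b lam = 0 := by
  have hd (i : Fin n) : (a i : ℂ) - lam ≠ 0 := sub_ne_zero.2 (mod_cast hlam i)
  have hM : rankOnePert n a u b - (lam : ℂ) • 1 =
      diagonal (fun i => (a i : ℂ) - lam) + vecMulVec ((b : ℂ) • u) (star u) := by
    rw [rankOnePert, smul_one_eq_diagonal, smul_vecMulVec, add_sub_right_comm, diagonal_sub]
  have hsec : 1 + ∑ i, star u i * (((b : ℂ) • u) i / ((a i : ℂ) - lam)) =
      (secularFun a (fun i => Complex.normSq (u i)) b lam : ℂ) := by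
    simp only [secularFun, Pi.smul_apply, smul_eq_mul, Pi.star_apply, Complex.star_def]
    push_cast
    simp only [Finset.mul_sum, Complex.normSq_eq_conj_mul_self]
    congr 1
    refine Finset.sum_congr rfl fun i _ => ?_
    ring
  rw [hM, det_diagonal_add_vecMulVec hd, mul_eq_zero,
    or_iff_right (Finset.prod_ne_zero_iff.2 fun i _ => hd i), hsec, Complex.ofReal_eq_zero]

/-- For `A` Hermitian with simple spectrum `a_1 > ⋯ > a_n`, `b > 0` and `x` with
all components `u_i ≠ 0` in the eigenbasis, the eigenvalues of `M = A + b x x†`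
distinct from the `a_i` are precisely the solutions of
`1 + b Σ_i |u_i|²/(a_i - λ) = 0`, and the eigenvalues `λ_1 > ⋯ > λ_n` of `M`
strictly interlace: `λ_1 > a_1 > λ_2 > a_2 > ⋯ > λ_n > a_n`. -/
theorem stmt16 (n : ℕ) (a : Fin n → ℝ) (ha : StrictAnti a)
    (u : Fin n → ℂ) (hu : ∀ i, 0 < Complex.normSq (u i)) (b : ℝ) (hb : 0 < b) :
    (∀ lam : ℝ, (∀ i, lam ≠ a i) →
      (((rankOnePert n a u b) - (lam : ℂ) • 1).det = 0 ↔
        1 + b * ∑ i, Complex.normSq (u i) / (a i - lam) = 0)) ∧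
    ∃ l : Fin n → ℝ, StrictAnti l ∧ (∀ i, a i < l i) ∧
      (∀ i : Fin n, ∀ h : (i : ℕ) + 1 < n, l ⟨(i : ℕ) + 1, h⟩ < a i) ∧
      ∀ i, ((rankOnePert n a u b) - (l i : ℂ) • 1).det = 0 := by
  refine ⟨fun lam hlam => det_rankOnePert_sub_smul_one_eq_zero_iff u b fun i => (hlam i).symm, ?_⟩
  choose l hgap hroot using exists_secularFun_eq_zero_mem_gapAbove ha hb hu
  refine ⟨l, fun i j hij => ((hgap j).2 i hij).trans (hgap i).1, fun i => (hgap i).1,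
    fun i h => (hgap _).2 i (Fin.lt_def.2 (Nat.lt_succ_self i)), fun i => ?_⟩
  exact (det_rankOnePert_sub_smul_one_eq_zero_iff u b (ne_of_mem_gapAbove ha (hgap i))).2 (hroot i)
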